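/- Value of a local optimum against its subsets (Lemma 4, first inequality): let F : Finset V → ℝ be a set function on a finite set V and let S ⊆ V be a local optimum of F. Then for every subset I ⊆ S, F(I) ≤ F(S) − C(|S \ I|, 2) · λ_F(S, 2), where C(n, 2) = n(n−1)/2 denotes the binomial coefficient. -/

import Mathlib

/-!
Write `λ = λ_F(S, 2)`. By the definition of the submodularity index applied to pairs, adding an
element of `S` to the base set lowers every marginal gain by at least `λ`; hence
`F_x(B) ≥ F_x(A) + |A \ B| λ` for `B ⊆ A ⊆ S`. Adding the elements `x₁, …, x_m` of `S \ I` to `I`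
one at a time, the `j`-th gain is at least `F_{x_j}(S \ {x_j}) + (m - j) λ ≥ (m - j) λ` by local
optimality, and these lower bounds sum to `C(m, 2) λ`.
-/

open Finset

variable {V : Type*} [Fintype V] [DecidableEq V]

/-- The marginal gain `F_S(A) = F(A ∪ S) − F(A)` generalizes `F_x(A)` via `S = {x}`.
The submodularity index (SmI) of `F` for a set `L ⊆ V` and cardinality `k` is the
minimum of `∑ x ∈ S, F_x(A) − F_S(A)` over all pairs `(S, A)` with `A ⊆ L`,
`S ∩ A = ∅`, and `|S| ≤ k`. -/
noncomputable def smI (F : Finset V → ℝ) (L : Finset V) (k : ℕ) : ℝ :=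
  (Finset.univ.filter (fun p : Finset V × Finset V =>
      p.2 ⊆ L ∧ p.1 ∩ p.2 = ∅ ∧ p.1.card ≤ k)).inf'
    ⟨(∅, ∅), by simp⟩
    (fun p => (∑ x ∈ p.1, (F (p.2 ∪ {x}) - F p.2)) - (F (p.2 ∪ p.1) - F p.2))

/-- A set `S ⊆ V` is a local optimum of `F` if `F(S) ≥ F(S \ {a})` for every `a ∈ S`
and `F(S) ≥ F(S ∪ {a})` for every `a ∉ S`. -/
def IsLocalOptimum (F : Finset V → ℝ) (S : Finset V) : Prop :=
  (∀ a ∈ S, F (S \ {a}) ≤ F S) ∧ (∀ a ∉ S, F (S ∪ {a}) ≤ F S)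

def marginalGain (F : Finset V → ℝ) (A : Finset V) (x : V) : ℝ :=
  F (A ∪ {x}) - F A

lemma smI_le (F : Finset V → ℝ) {L A T : Finset V} {k : ℕ}
    (hA : A ⊆ L) (hTA : Disjoint T A) (hT : #T ≤ k) :
    smI F L k ≤ ∑ x ∈ T, marginalGain F A x - (F (A ∪ T) - F A) := by
  exact inf'_le _ (b := (T, A)) <| mem_filter.mpr ⟨mem_univ _, hA, disjoint_iff_inter_eq_empty.mp hTA, hT⟩

lemma marginalGain_union_singleton_add_smI_le (F : Finset V → ℝ) {L A : Finset V} {x y : V}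
    (hA : A ⊆ L) (hxA : x ∉ A) (hyA : y ∉ A) (hxy : x ≠ y) :
    marginalGain F (A ∪ {y}) x + smI F L 2 ≤ marginalGain F A x := by
  have hpair := smI_le F hA (T := {x, y}) (k := 2)
    (by simp [disjoint_insert_left, hxA, hyA]) card_le_two
  have hunion : A ∪ {x, y} = A ∪ {y} ∪ {x} := by
    ext; simp only [mem_union, mem_insert, mem_singleton]; tauto
  rw [sum_pair hxy, hunion] at hpair
  unfold marginalGain at *
  linarith

lemma marginalGain_union_add_card_mul_smI_le (F : Finset V → ℝ) {L B D : Finset V} {x : V}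
    (hL : B ∪ D ⊆ L) (hBD : Disjoint B D) (hx : x ∉ B ∪ D) :
    marginalGain F (B ∪ D) x + #D * smI F L 2 ≤ marginalGain F B x := by
  induction D using Finset.induction_on with
  | empty => simp
  | insert y D hyD ih =>
    rw [disjoint_insert_right] at hBD
    rw [union_insert, insert_subset_iff] at hL
    rw [union_insert, mem_insert, not_or] at hx
    have hstep : marginalGain F (insert y (B ∪ D)) x + smI F L 2 ≤ marginalGain F (B ∪ D) x :=
      union_singleton y (B ∪ D) ▸
        marginalGain_union_singleton_add_smI_le F hL.2 hx.2 (by simp [hBD.1, hyD]) hx.1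
    rw [union_insert, card_insert_of_notMem hyD]
    push_cast
    linarith [ih hL.2 hBD.2 hx.2]

omit [Fintype V] in
lemma IsLocalOptimum.marginalGain_nonneg {F : Finset V → ℝ} {S A : Finset V} {x : V}
    (hS : IsLocalOptimum F S) (hxA : x ∉ A) (hAS : A ∪ {x} = S) :
    0 ≤ marginalGain F A x := by
  have hsdiff : S \ {x} = A := hAS ▸ union_sdiff_cancel_right (disjoint_singleton_right.mpr hxA)
  have := hS.1 x (hAS ▸ mem_union_right A (mem_singleton_self x))
  rw [hsdiff] at this
  rw [marginalGain, hAS]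
  linarith

lemma IsLocalOptimum.add_choose_mul_smI_le {F : Finset V → ℝ} {S : Finset V}
    (hS : IsLocalOptimum F S) {I D : Finset V} (hID : Disjoint I D) (hIDS : I ∪ D = S) :
    F I + ((#D).choose 2 : ℝ) * smI F S 2 ≤ F S := by
  induction D using Finset.induction_on generalizing I with
  | empty => simp [← hIDS]
  | insert x D hxD ih =>
    rw [disjoint_insert_right] at hID
    have hx : x ∉ I ∪ D := by simp [hID.1, hxD]
    have hrest := ih (I := I ∪ {x}) (by simp [hID.2, hxD])
      (by rw [← hIDS, union_right_comm, union_singleton, union_insert])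
    have hchain := marginalGain_union_add_card_mul_smI_le F (L := S)
      (hIDS ▸ union_subset_union_right (subset_insert x D)) hID.2 hx
    have hlast := hS.marginalGain_nonneg hx
      (by rw [← hIDS, union_singleton, union_insert])
    have hchoose : ((#D + 1).choose 2 : ℝ) = (#D).choose 2 + #D := by
      rw [Nat.choose_succ_succ', Nat.choose_one_right]; push_cast; ring
    rw [card_insert_of_notMem hxD, hchoose]
    unfold marginalGain at hchain hlast
    linarith

/-- Value of a local optimum against its subsets (Lemma 4, first inequality):
if `S` is a local optimum of `F`, then for every `I ⊆ S`,
`F(I) ≤ F(S) − C(|S \ I|, 2) · λ_F(S, 2)`. -/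
theorem local_optimum_subset_bound (F : Finset V → ℝ)
    (S : Finset V) (hS : IsLocalOptimum F S)
    (I : Finset V) (hI : I ⊆ S) :
    F I ≤ F S - ((S \ I).card.choose 2 : ℝ) * smI F S 2 := by
  have := hS.add_choose_mul_smI_le disjoint_sdiff (union_sdiff_of_subset hI)
  linarith
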